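/- For all n, k: ∑_{j=0}^{n} C(2n+1-j, j)·LS(j,k) = (k+1)·T(n+1, k+1), where LS are the Legendre-Stirling numbers and T are the central factorial numbers of the second kind. -/
import Mathlib

/-- Central factorial numbers of the second kind:
T(n,k) = T(n-1,k-1) + k² T(n-1,k), T(0,k)=[k=0], T(n,0)=[n=0]. -/
def centralFactorialT : ℕ → ℕ → ℕ
  | 0, 0 => 1
  | 0, _ + 1 => 0
  | _ + 1, 0 => 0
  | n + 1, k + 1 => centralFactorialT n k + (k + 1) ^ 2 * centralFactorialT n (k + 1)

/-- Legendre-Stirling numbers: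
LS(n,k) = LS(n-1,k-1) + k(k+1) LS(n-1,k), LS(0,k)=[k=0], LS(n,0)=[n=0]. -/
def legendreStirling : ℕ → ℕ → ℕ
  | 0, 0 => 1
  | 0, _ + 1 => 0
  | _ + 1, 0 => 0
  | n + 1, k + 1 => legendreStirling n k + (k + 1) * (k + 2) * legendreStirling n (k + 1)

def Esum (n k : ℕ) : ℕ := ∑ j ∈ Finset.range (n + 1), (2 * n - j).choose j * legendreStirling j k
def Ssum (n k : ℕ) : ℕ := ∑ j ∈ Finset.range (n + 1), (2 * n + 1 - j).choose j * legendreStirling j k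

lemma ssum_succ (n k : ℕ) :
    Ssum (n+1) k = Esum (n+1) k
      + ∑ j ∈ Finset.range (n+1), (2*n+1-j).choose j * legendreStirling (j+1) k := by
  unfold Ssum Esum
  conv_lhs => rw [Finset.sum_range_succ']
  conv_rhs => rw [Finset.sum_range_succ' (n := n+1)]
  have h : ∀ j ∈ Finset.range (n+1),
      (2*(n+1)+1-(j+1)).choose (j+1) * legendreStirling (j+1) k
      = (2*n+1-j).choose j * legendreStirling (j+1) k
        + (2*(n+1)-(j+1)).choose (j+1) * legendreStirling (j+1) k := by
    intro j hj
    have hj' : j ≤ n := Finset.mem_range_succ_iff.mp hj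
    have e2 : 2*(n+1)-(j+1) = 2*n+1-j := by omega
    have e1 : 2*(n+1)+1-(j+1) = (2*n+1-j)+1 := by omega
    rw [e2, e1, Nat.choose_succ_succ, add_mul]
  rw [Finset.sum_congr rfl h, Finset.sum_add_distrib]
  simp only [Nat.choose_zero_right, Nat.sub_zero]
  ring

lemma ssum_expand (n k : ℕ) :
    Ssum n k = ∑ j ∈ Finset.range (n + 2), (2 * n + 1 - j).choose j * legendreStirling j k := by
  unfold Ssum
  rw [Finset.sum_range_succ (n := n+1)]
  have hz : (2*n+1-(n+1)).choose (n+1) = 0 := by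
    apply Nat.choose_eq_zero_of_lt; omega
  rw [hz, zero_mul, add_zero]

lemma esum_succ (n k : ℕ) :
    Esum (n+1) k = Ssum n k
      + ∑ j ∈ Finset.range (n+1), (2*n-j).choose j * legendreStirling (j+1) k := by
  rw [ssum_expand]
  unfold Esum
  conv_lhs => rw [Finset.sum_range_succ']
  conv_rhs => rw [Finset.sum_range_succ' (n := n+1)]
  have h : ∀ j ∈ Finset.range (n+1),
      (2*(n+1)-(j+1)).choose (j+1) * legendreStirling (j+1) k
      = (2*n-j).choose j * legendreStirling (j+1) k
        + (2*n+1-(j+1)).choose (j+1) * legendreStirling (j+1) k := by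
    intro j hj
    have hj' : j ≤ n := Finset.mem_range_succ_iff.mp hj
    have e2 : 2*n+1-(j+1) = 2*n-j := by omega
    have e1 : 2*(n+1)-(j+1) = (2*n-j)+1 := by omega
    rw [e2, e1, Nat.choose_succ_succ, add_mul]
  rw [Finset.sum_congr rfl h, Finset.sum_add_distrib]
  simp only [Nat.choose_zero_right, Nat.sub_zero]
  ring

lemma shift_sum (k : ℕ) (s : Finset ℕ) (f : ℕ → ℕ) :
    ∑ j ∈ s, f j * legendreStirling (j+1) (k+1)
    = ∑ j ∈ s, f j * legendreStirling j k
      + (k+1)*(k+2) * ∑ j ∈ s, f j * legendreStirling j (k+1) := by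
  rw [Finset.mul_sum, ← Finset.sum_add_distrib]
  refine Finset.sum_congr rfl fun j _ => ?_
  show f j * (legendreStirling j k + (k + 1) * (k + 2) * legendreStirling j (k + 1)) = _
  ring

lemma shift_sum_zero (s : Finset ℕ) (f : ℕ → ℕ) :
    ∑ j ∈ s, f j * legendreStirling (j+1) 0 = 0 := by
  refine Finset.sum_eq_zero fun j _ => ?_
  show f j * 0 = 0
  ring

lemma esum_step0 (n : ℕ) : Esum (n+1) 0 = Ssum n 0 := by
  rw [esum_succ, shift_sum_zero, add_zero]

lemma esum_step (n k : ℕ) :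
    Esum (n+1) (k+1) = Ssum n (k+1) + (Esum n k + (k+1)*(k+2) * Esum n (k+1)) := by
  rw [esum_succ, shift_sum]; rfl

lemma ssum_step0 (n : ℕ) : Ssum (n+1) 0 = Esum (n+1) 0 := by
  rw [ssum_succ, shift_sum_zero, add_zero]

lemma ssum_step (n k : ℕ) :
    Ssum (n+1) (k+1) = Esum (n+1) (k+1) + (Ssum n k + (k+1)*(k+2) * Ssum n (k+1)) := by
  rw [ssum_succ, shift_sum]; rfl

lemma key : ∀ n, (∀ k, Esum n k = centralFactorialT (n+1) (k+1))
    ∧ (∀ k, Ssum n k = (k+1) * centralFactorialT (n+1) (k+1)) := by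
  intro n
  induction n with
  | zero =>
    constructor <;> intro k <;> cases k <;>
      simp [Esum, Ssum, legendreStirling, centralFactorialT]
  | succ n ih =>
    obtain ⟨ihE, ihS⟩ := ih
    have hE : ∀ k, Esum (n+1) k = centralFactorialT (n+2) (k+1) := by
      intro k
      cases k with
      | zero =>
        rw [esum_step0, ihS 0]
        show _ = centralFactorialT (n+1) 0 + 1^2 * centralFactorialT (n+1) 1
        simp [centralFactorialT]
      | succ k =>
        rw [esum_step, ihS (k+1), ihE k, ihE (k+1)]
        show _ = centralFactorialT (n+1) (k+1) + (k+2)^2 * centralFactorialT (n+1) (k+2)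
        ring
    refine ⟨hE, fun k => ?_⟩
    cases k with
    | zero =>
      rw [ssum_step0, hE 0]; simp
    | succ k =>
      rw [ssum_step, hE (k+1), ihS k, ihS (k+1)]
      have hrec : centralFactorialT (n+2) (k+2)
          = centralFactorialT (n+1) (k+1) + (k+2)^2 * centralFactorialT (n+1) (k+2) := rfl
      rw [hrec]
      show _ = (k+2) * (centralFactorialT (n+1) (k+1) + (k+2)^2 * centralFactorialT (n+1) (k+2))
      ring

theorem sum_choose_legendreStirling_odd (n k : ℕ) :
    ∑ j ∈ Finset.range (n + 1), (2 * n + 1 - j).choose j * legendreStirling j k =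
      (k + 1) * centralFactorialT (n + 1) (k + 1) := by
  exact (key n).2 k
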